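/- Let v be a piecewise linear continuous function on the boundary ∂E of a polygon E whose edges all have length comparable to the diameter h of E (|ε| ≥ c̃ h for each edge ε). Then ‖v‖_{∞,∂E} ≤ C ( |v|_{1/2,∂E} + h^{−1/2} ‖v‖_{0,∂E} ), with C depending only on the shape-regularity constants and not on h. -/

import Mathlib

open MeasureTheory
open scoped ENNReal

/-- L²(Γ) norm of `v` on a boundary `Γ ⊂ ℝ²`, w.r.t. the 1-dimensional
Hausdorff measure. -/
noncomputable def bdryL2 (Γ : Set (EuclideanSpace ℝ (Fin 2)))
    (v : EuclideanSpace ℝ (Fin 2) → ℝ) : ℝ :=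
  Real.sqrt ((∫⁻ x in Γ, (‖v x‖₊ : ℝ≥0∞) ^ 2 ∂(μH[1])).toReal)

/-- H^{1/2}(Γ) (Gagliardo) seminorm of `v` on `Γ ⊂ ℝ²`, w.r.t. the
1-dimensional Hausdorff measure. -/
noncomputable def bdryHhalf (Γ : Set (EuclideanSpace ℝ (Fin 2)))
    (v : EuclideanSpace ℝ (Fin 2) → ℝ) : ℝ :=
  Real.sqrt ((∫⁻ x in Γ, ∫⁻ y in Γ,
    (‖v x - v y‖₊ : ℝ≥0∞) ^ 2 / (edist x y) ^ 2 ∂(μH[1]) ∂(μH[1])).toReal)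

/-! On each edge `v` is affine, so `|v|` attains its maximum `M` over `∂E` at a vertex `p`.
Along the first quarter of an edge issuing from `p`, `|v| ≥ M / 2`; that quarter has length
at least `c̃ h / 4`, so `‖v‖²_{0,∂E} ≥ M² c̃ h / 16`, i.e. `M ≤ 4 (c̃ h)^{-1/2} ‖v‖_{0,∂E}`. -/

open Set AffineMap Convex

theorem Set.EqOn.apply_mem_segment {𝕜 E F : Type*} [Ring 𝕜] [PartialOrder 𝕜] [IsOrderedRing 𝕜]
    [AddCommGroup E] [Module 𝕜 E] [AddCommGroup F] [Module 𝕜 F] {v : E → F} {f : E →ᵃ[𝕜] F}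
    {a b x : E} (hv : EqOn v f [a -[𝕜] b]) (hx : x ∈ [a -[𝕜] b]) : v x ∈ [v a -[𝕜] v b] := by
  rw [hv hx, hv (left_mem_segment 𝕜 a b), hv (right_mem_segment 𝕜 a b), ← image_segment]
  exact mem_image_of_mem f hx

theorem half_abs_le_abs_of_mem_segment_lineMap {a b x : ℝ} (hba : |b| ≤ |a|)
    (hx : x ∈ [a -[ℝ] lineMap a b (4⁻¹ : ℝ)]) : |a| / 2 ≤ |x| := by
  rw [segment_eq_image_lineMap] at hx
  obtain ⟨s, ⟨hs0, hs1⟩, rfl⟩ := hx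
  set d := s / 4 * (b - a)
  have hx : lineMap a (lineMap a b (4⁻¹ : ℝ)) s = a + d := by
    simp only [d, lineMap_apply_ring']; ring
  have hd : |d| ≤ |a| / 2 := by
    have hba' : |b - a| ≤ 2 * |a| := by linarith [abs_sub b a]
    rw [abs_mul, abs_of_nonneg (by positivity)]
    nlinarith [abs_nonneg (b - a)]
  have htri := abs_add_le (a + d) (-d)
  rw [add_neg_cancel_right, abs_neg] at htri
  rw [hx]
  linarith

section Segment

variable {E : Type*} [NormedAddCommGroup E] [NormedSpace ℝ E] [MeasurableSpace E] [BorelSpace E]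
  {v : E → ℝ} {f : E →ᵃ[ℝ] ℝ} {p q : E}

theorem ofReal_le_setLIntegral_segment_of_abs_le (hv : EqOn v f [p -[ℝ] q]) (hqp : |v q| ≤ |v p|) :
    ENNReal.ofReal (|v p| ^ 2 * dist p q / 16) ≤
      ∫⁻ x in [p -[ℝ] q], (‖v x‖₊ : ℝ≥0∞) ^ 2 ∂μH[1] := by
  set m := lineMap p q (4⁻¹ : ℝ)
  have hm : m ∈ [p -[ℝ] q] := lineMap_mem_segment ℝ p q ⟨by norm_num, by norm_num⟩
  have hsub : [p -[ℝ] m] ⊆ [p -[ℝ] q] :=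
    (convex_segment p q).segment_subset (left_mem_segment ℝ p q) hm
  have hvm : v m = lineMap (v p) (v q) (4⁻¹ : ℝ) := by
    rw [hv hm, f.apply_lineMap, ← hv (left_mem_segment ℝ p q), ← hv (right_mem_segment ℝ p q)]
  have hlow : ∀ x ∈ [p -[ℝ] m], ENNReal.ofReal ((|v p| / 2) ^ 2) ≤ (‖v x‖₊ : ℝ≥0∞) ^ 2 := by
    intro x hx
    have hvx := (hv.mono hsub).apply_mem_segment hx
    rw [hvm] at hvx
    rw [← enorm_eq_nnnorm, ← ofReal_norm, ← ENNReal.ofReal_pow (norm_nonneg _), Real.norm_eq_abs]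
    gcongr
    exact half_abs_le_abs_of_mem_segment_lineMap hqp hvx
  have hmeas : MeasurableSet [p -[ℝ] m] := by
    rw [segment_eq_image_lineMap]
    exact (isCompact_Icc.image lineMap_continuous).measurableSet
  have hμ : μH[1] [p -[ℝ] m] = ENNReal.ofReal (dist p q / 4) := by
    rw [hausdorffMeasure_segment, edist_dist, dist_left_lineMap]
    norm_num [div_eq_inv_mul]
  calc ENNReal.ofReal (|v p| ^ 2 * dist p q / 16)
      = ENNReal.ofReal ((|v p| / 2) ^ 2) * μH[1] [p -[ℝ] m] := by
        rw [hμ, ← ENNReal.ofReal_mul (by positivity)]; ring_nf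
    _ = ∫⁻ _ in [p -[ℝ] m], ENNReal.ofReal ((|v p| / 2) ^ 2) ∂μH[1] := (setLIntegral_const _ _).symm
    _ ≤ ∫⁻ x in [p -[ℝ] m], (‖v x‖₊ : ℝ≥0∞) ^ 2 ∂μH[1] :=
        setLIntegral_mono' hmeas hlow
    _ ≤ ∫⁻ x in [p -[ℝ] q], (‖v x‖₊ : ℝ≥0∞) ^ 2 ∂μH[1] := lintegral_mono_set hsub

theorem ofReal_le_setLIntegral_segment (hv : EqOn v f [p -[ℝ] q]) :
    ENNReal.ofReal (max |v p| |v q| ^ 2 * dist p q / 16) ≤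
      ∫⁻ x in [p -[ℝ] q], (‖v x‖₊ : ℝ≥0∞) ^ 2 ∂μH[1] := by
  rcases le_total |v q| |v p| with hqp | hpq
  · rw [max_eq_left hqp]
    exact ofReal_le_setLIntegral_segment_of_abs_le hv hqp
  · rw [max_eq_right hpq, dist_comm, segment_symm] at *
    exact ofReal_le_setLIntegral_segment_of_abs_le hv hpq

end Segment

section PolygonalChain

variable {E ι : Type*} [NormedAddCommGroup E] [NormedSpace ℝ E] [MeasurableSpace E] [BorelSpace E]
  [Fintype ι] {a b : ι → E} {v : E → ℝ} {f : ι → E →ᵃ[ℝ] ℝ}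

theorem hausdorffMeasure_iUnion_segment_ne_top : μH[1] (⋃ i, [a i -[ℝ] b i]) ≠ ∞ :=
  ((measure_iUnion_fintype_le _ _).trans_lt <| ENNReal.sum_lt_top.2 fun i _ => by
    simp [edist_lt_top]).ne

theorem abs_mul_sqrt_le_sqrt_setLIntegral_iUnion_segment {L : ℝ} (hL : ∀ i, L ≤ dist (a i) (b i))
    (hv : ∀ i, EqOn v (f i) [a i -[ℝ] b i]) {x : E} (hx : x ∈ ⋃ i, [a i -[ℝ] b i]) :
    |v x| * √L / 4 ≤ √((∫⁻ y in ⋃ i, [a i -[ℝ] b i], (‖v y‖₊ : ℝ≥0∞) ^ 2 ∂μH[1]).toReal) := by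
  obtain ⟨i, -⟩ := mem_iUnion.1 hx
  have : Nonempty ι := ⟨i⟩
  obtain ⟨j, hj⟩ := Finite.exists_max fun i => max |v (a i)| |v (b i)|
  set M := max |v (a j)| |v (b j)|
  have hbound : ∀ y ∈ ⋃ i, [a i -[ℝ] b i], |v y| ≤ M := by
    intro y hy
    obtain ⟨k, hyk⟩ := mem_iUnion.1 hy
    exact ((convexOn_norm convex_univ).le_on_segment trivial trivial
      ((hv k).apply_mem_segment hyk)).trans (hj k)
  have hM : 0 ≤ M := (abs_nonneg _).trans (hbound x hx)
  have hfin : ∫⁻ y in ⋃ i, [a i -[ℝ] b i], (‖v y‖₊ : ℝ≥0∞) ^ 2 ∂μH[1] ≠ ∞ := by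
    refine (setLIntegral_lt_top_of_le_nnreal hausdorffMeasure_iUnion_segment_ne_top
      ⟨M.toNNReal ^ 2, fun y hy => ?_⟩).ne
    rw [ENNReal.coe_pow]
    gcongr
    rw [Real.le_toNNReal_iff_coe_le hM,
      coe_nnnorm, Real.norm_eq_abs]
    exact hbound y hy
  have hlb : ENNReal.ofReal (M ^ 2 * L / 16) ≤
      ∫⁻ y in ⋃ i, [a i -[ℝ] b i], (‖v y‖₊ : ℝ≥0∞) ^ 2 ∂μH[1] := by
    refine le_trans ?_ ((ofReal_le_setLIntegral_segment (hv j)).trans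
      (lintegral_mono_set (subset_iUnion (fun i => [a i -[ℝ] b i]) j)))
    gcongr
    exact hL j
  calc |v x| * √L / 4 ≤ M * √L / 4 := by gcongr; exact hbound x hx
    _ = √(M ^ 2 * L / 16) := by
      rw [show M ^ 2 * L / 16 = (M / 4) ^ 2 * L by ring, Real.sqrt_mul (sq_nonneg _),
        Real.sqrt_sq (by positivity)]
      ring
    _ ≤ _ := Real.sqrt_le_sqrt ((ENNReal.ofReal_le_iff_le_toReal hfin).1 hlb)

end PolygonalChain

/-- For piecewise linear continuous functions `v` on the boundary
∂E of a shape-regular polygon E of diameter h (edges of length ≥ c̃ h,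
star-shaped with respect to a ball of radius ρ h),
‖v‖_{∞,∂E} ≤ C ( |v|_{1/2,∂E} + h^{−1/2} ‖v‖_{0,∂E} ), with C depending only
on the shape constants ρ, c̃ and not on h. -/
theorem stmt_19 (ρ ctil : ℝ) (hctil : 0 < ctil) :
    ∃ C : ℝ, 0 < C ∧
      ∀ (N : ℕ) (hN : 3 ≤ N)
        (w : Fin N → EuclideanSpace ℝ (Fin 2)) (h : ℝ), 0 < h →
      ∀ (Eset Γ : Set (EuclideanSpace ℝ (Fin 2))),
        Γ = (⋃ i : Fin N, segment ℝ (w i) (w ⟨(i.1 + 1) % N, Nat.mod_lt _ (by omega)⟩)) →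
        Γ = frontier Eset →
        Metric.diam Eset = h →
        (∀ i : Fin N, ctil * h ≤ dist (w i) (w ⟨(i.1 + 1) % N, Nat.mod_lt _ (by omega)⟩)) →
        (∃ x₀ : EuclideanSpace ℝ (Fin 2), Metric.ball x₀ (ρ * h) ⊆ Eset ∧
          ∀ c ∈ Metric.ball x₀ (ρ * h), StarConvex ℝ c Eset) →
        ∀ v : EuclideanSpace ℝ (Fin 2) → ℝ, ContinuousOn v Γ →
        (∀ i : Fin N, ∃ (l : EuclideanSpace ℝ (Fin 2) →ₗ[ℝ] ℝ) (c : ℝ),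
          ∀ x ∈ segment ℝ (w i) (w ⟨(i.1 + 1) % N, Nat.mod_lt _ (by omega)⟩), v x = l x + c) →
        (⨆ x : Γ, |v (x : EuclideanSpace ℝ (Fin 2))|) ≤
          C * (bdryHhalf Γ v + (Real.sqrt h)⁻¹ * bdryL2 Γ v) := by
  refine ⟨4 / √ctil, by positivity, ?_⟩
  intro N hN w h hh Eset Γ hΓ _ _ hedges _ v _ hlin
  choose l c hlc using hlin
  obtain ⟨f, hv⟩ : ∃ f : Fin N → EuclideanSpace ℝ (Fin 2) →ᵃ[ℝ] ℝ, ∀ i, EqOn v (f i)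
      (segment ℝ (w i) (w ⟨(i.1 + 1) % N, Nat.mod_lt _ (by omega)⟩)) :=
    ⟨fun i => (l i).toAffineMap + AffineMap.const ℝ _ (c i), fun i x hx => by simp [hlc i x hx]⟩
  have hHhalf : 0 ≤ bdryHhalf Γ v := Real.sqrt_nonneg _
  have hL2 : 0 ≤ bdryL2 Γ v := Real.sqrt_nonneg _
  refine Real.iSup_le (fun x => ?_) (by positivity)
  have key := abs_mul_sqrt_le_sqrt_setLIntegral_iUnion_segment hedges hv (by rw [← hΓ]; exact x.2)
  rw [← hΓ, Real.sqrt_mul hctil.le] at key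
  change _ ≤ bdryL2 Γ v at key
  calc |v x| = 4 / √ctil * (√h)⁻¹ * (|v x| * (√ctil * √h) / 4) := by
        field_simp
    _ ≤ 4 / √ctil * ((√h)⁻¹ * bdryL2 Γ v) := by
        rw [mul_assoc]; gcongr
    _ ≤ 4 / √ctil * (bdryHhalf Γ v + (√h)⁻¹ * bdryL2 Γ v) := by
        gcongr; exact le_add_of_nonneg_left hHhalf
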